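/- For every integer n ≥ 4, the characteristic polynomial of the signless Laplacian matrix of the graph B_n¹ equals (x−1)^{n−4} (x−2) (x³ − (n+4)x² + 4n·x − 8). -/

import Mathlib

open Polynomial

/-- The signless Laplacian matrix `Q(G) = D(G) + A(G)` of a simple graph, over `ℝ`. -/
noncomputable def signlessLaplacian {V : Type*} [Fintype V] [DecidableEq V]
    (G : SimpleGraph V) : Matrix V V ℝ :=
  letI := Classical.decRel G.Adj
  G.degMatrix ℝ + G.adjMatrix ℝ

/-- The signless Laplacian characteristic polynomial `Q_G(x) = det (x I - Q(G))`. -/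
noncomputable def Qpoly {V : Type*} [Fintype V] [DecidableEq V] (G : SimpleGraph V) :
    Polynomial ℝ :=
  (signlessLaplacian G).charpoly

/-- The signless Laplacian coefficients: `φ_i(G)` is `(-1)^i` times the coefficient of
`x^(n-i)` in the signless Laplacian characteristic polynomial. -/
noncomputable def phi {V : Type*} [Fintype V] [DecidableEq V] (G : SimpleGraph V) (i : ℕ) : ℝ :=
  (-1 : ℝ) ^ i * (Qpoly G).coeff (Fintype.card V - i)
/-- Attach `p i` pendant vertices at each vertex `i` of a base graph `H` on `Fin k`. -/
def addPendants {k : ℕ} (H : SimpleGraph (Fin k)) (p : Fin k → ℕ) :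
    SimpleGraph ((Fin k) ⊕ (Σ i : Fin k, Fin (p i))) where
  Adj x y :=
    match x, y with
    | Sum.inl a, Sum.inl b => H.Adj a b
    | Sum.inl a, Sum.inr b => a = b.1
    | Sum.inr a, Sum.inl b => a.1 = b
    | Sum.inr _, Sum.inr _ => False
  symm := ⟨by
    rintro (a | a) (b | b) h
    · exact H.adj_symm h
    · exact h.symm
    · exact h.symm
    · exact h⟩
  loopless := ⟨by
    rintro (a | a) h
    · exact H.irrefl h
    · exact h⟩
/-- The base of `B₃`: vertices `u,v,w,z = 0,1,2,3` with edges `uv, uw, vw, uz, vz`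
(the 4-cycle `u w v z` plus the chord `uv`). -/
def B3base : SimpleGraph (Fin 4) :=
  SimpleGraph.fromRel (fun a b =>
    (a = 0 ∧ b = 1) ∨ (a = 0 ∧ b = 2) ∨ (a = 1 ∧ b = 2) ∨
    (a = 0 ∧ b = 3) ∨ (a = 1 ∧ b = 3))

/-- `B₃(a,b,c,d)`: the base `B₃` with `a,b,c,d` pendant vertices attached at
`u,v,w,z` respectively. -/
def B3 (a b c d : ℕ) := addPendants B3base ![a, b, c, d]

/-!
Order the vertices of `addPendants H p` as base vertices followed by pendant vertices. Then
`Q = [[Q(H) + diag p, N], [Nᵀ, I]]`, where `N` is the base–pendant incidence matrix and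
`N Nᵀ = diag p`. For `x ≠ 1` the Schur complement of the block `(x - 1) I` of `x I - Q` gives
`Q_G(x) = (x - 1)^(∑ p) · det (x I - Q(H) - diag (p x / (x - 1)))`, which for `B_n¹` is an explicit
`4 × 4` determinant. Both sides of the claimed identity are polynomials agreeing at every
`x ≠ 1`, hence equal.
-/

open Matrix

theorem Matrix.det_fromBlocks_smul_one₂₂ {K m n : Type*} [Field K] [Fintype m] [Fintype n]
    [DecidableEq m] [DecidableEq n] (A : Matrix m m K) (B : Matrix m n K) (C : Matrix n m K)
    {c : K} (hc : c ≠ 0) :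
    (fromBlocks A B C (c • 1)).det = c ^ Fintype.card n * (A - c⁻¹ • (B * C)).det := by
  have hfactor :
      fromBlocks A B C (c • 1) = fromBlocks A (c⁻¹ • B) C 1 * fromBlocks 1 0 0 (c • 1) := by
    simp [fromBlocks_multiply, smul_smul, mul_inv_cancel₀ hc]
  rw [hfactor, det_mul, det_fromBlocks_one₂₂, det_fromBlocks_zero₂₁, det_smul, Matrix.smul_mul]
  simp [mul_comm]

section Pendants

variable {k : ℕ} (H : SimpleGraph (Fin k)) (p : Fin k → ℕ)

@[simp] lemma addPendants_adj_inl_inl (a b : Fin k) :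
    (addPendants H p).Adj (.inl a) (.inl b) ↔ H.Adj a b := Iff.rfl

@[simp] lemma addPendants_adj_inl_inr (a : Fin k) (s : Σ i, Fin (p i)) :
    (addPendants H p).Adj (.inl a) (.inr s) ↔ a = s.1 := Iff.rfl

@[simp] lemma addPendants_adj_inr_inl (s : Σ i, Fin (p i)) (b : Fin k) :
    (addPendants H p).Adj (.inr s) (.inl b) ↔ s.1 = b := Iff.rfl

@[simp] lemma addPendants_adj_inr_inr (s t : Σ i, Fin (p i)) :
    ¬ (addPendants H p).Adj (.inr s) (.inr t) := id

lemma degree_addPendants_inl [DecidableRel H.Adj] [DecidableRel (addPendants H p).Adj]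
    (a : Fin k) : (addPendants H p).degree (.inl a) = H.degree a + p a := by
  rw [← Nat.cast_id (H.degree a), ← Nat.cast_id ((addPendants H p).degree _),
    SimpleGraph.degree_eq_sum_if_adj, SimpleGraph.degree_eq_sum_if_adj, Fintype.sum_sum_type,
    Fintype.sum_sigma]
  simp

lemma degree_addPendants_inr [DecidableRel (addPendants H p).Adj] (s : Σ i, Fin (p i)) :
    (addPendants H p).degree (.inr s) = 1 := by
  rw [← Nat.cast_id ((addPendants H p).degree _), SimpleGraph.degree_eq_sum_if_adj,
    Fintype.sum_sum_type, Fintype.sum_sigma]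
  simp

def pendantIncidence : Matrix (Fin k) (Σ i, Fin (p i)) ℝ :=
  of fun a s => if a = s.1 then 1 else 0

lemma pendantIncidence_mul_transpose :
    pendantIncidence p * (pendantIncidence p)ᵀ = diagonal fun a => (p a : ℝ) := by
  ext a b
  by_cases hab : a = b <;>
    simp [hab, pendantIncidence, mul_apply, Fintype.sum_sigma]

lemma signlessLaplacian_addPendants :
    signlessLaplacian (addPendants H p) =
      fromBlocks (signlessLaplacian H + diagonal fun a => (p a : ℝ))
        (pendantIncidence p) (pendantIncidence p)ᵀ 1 := by
  classical
  ext (a | s) (b | t)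
  · simp [signlessLaplacian, SimpleGraph.degMatrix, diagonal_apply, degree_addPendants_inl]
    split_ifs <;> ring
  · simp [signlessLaplacian, SimpleGraph.degMatrix, pendantIncidence]
  · simp [signlessLaplacian, SimpleGraph.degMatrix, pendantIncidence, eq_comm]
  · simp [signlessLaplacian, SimpleGraph.degMatrix, diagonal_apply, one_apply,
      degree_addPendants_inr]

lemma eval_Qpoly_addPendants {x : ℝ} (hx : x ≠ 1) :
    (Qpoly (addPendants H p)).eval x = (x - 1) ^ (∑ a, p a) *
      (scalar (Fin k) x - signlessLaplacian H - diagonal fun a => p a * x / (x - 1)).det := by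
  have hx' : x - 1 ≠ 0 := sub_ne_zero.2 hx
  have hblocks : scalar _ x - signlessLaplacian (addPendants H p) =
      fromBlocks (scalar _ x - signlessLaplacian H - diagonal fun a => (p a : ℝ))
        (-pendantIncidence p) (-(pendantIncidence p)ᵀ) ((x - 1) • 1) := by
    rw [signlessLaplacian_addPendants]
    ext (a | s) (b | t) <;> simp [diagonal_apply, one_apply, sub_sub]
    split_ifs <;> ring
  have hdiag (a : Fin k) : (p a : ℝ) + (x - 1)⁻¹ * p a = p a * x / (x - 1) := by
    field_simp
    ring
  rw [Qpoly, eval_charpoly, hblocks, det_fromBlocks_smul_one₂₂ _ _ _ hx', Matrix.neg_mul,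
    Matrix.mul_neg, neg_neg, pendantIncidence_mul_transpose, Fintype.card_sigma]
  simp only [Fintype.card_fin]
  rw [sub_sub, ← diagonal_smul, diagonal_add]
  simp only [Pi.smul_apply, smul_eq_mul, hdiag]

end Pendants

lemma signlessLaplacian_B3base :
    signlessLaplacian B3base = !![3, 1, 1, 1; 1, 3, 1, 1; 1, 1, 2, 0; 1, 1, 0, 2] := by
  ext a b
  simp only [signlessLaplacian, SimpleGraph.degMatrix, Matrix.add_apply, diagonal_apply,
    SimpleGraph.adjMatrix_apply, SimpleGraph.degree_eq_sum_if_adj, Fin.sum_univ_four]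
  fin_cases a <;> fin_cases b <;> simp [B3base, SimpleGraph.fromRel_adj] <;> norm_num

lemma eval_Qpoly_B3 (m : ℕ) {x : ℝ} (hx : x ≠ 1) :
    (Qpoly (B3 m 0 0 0)).eval x =
      (x - 1) ^ m * (x - 2) * (x ^ 3 - (m + 8) * x ^ 2 + (4 * m + 16) * x - 8) := by
  have hreduced : scalar (Fin 4) x - !![3, 1, 1, 1; 1, 3, 1, 1; 1, 1, 2, 0; 1, 1, 0, 2] -
      (diagonal fun a => (![m, 0, 0, 0] a : ℝ) * x / (x - 1)) =
      !![x - 3 - m * x / (x - 1), -1, -1, -1; -1, x - 3, -1, -1; -1, -1, x - 2, 0;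
        -1, -1, 0, x - 2] := by
    ext a b
    fin_cases a <;> fin_cases b <;> simp
  rw [B3, eval_Qpoly_addPendants _ _ hx, signlessLaplacian_B3base, hreduced]
  simp [det_succ_row_zero, Fin.sum_univ_succ, Fin.succAbove]
  field_simp
  ring

/-- `B_n¹ = B₃(n − 4, 0, 0, 0)`. -/
theorem Qpoly_Bn1 (n : ℕ) (hn : 4 ≤ n) :
    Qpoly (B3 (n - 4) 0 0 0) =
      (X - 1) ^ (n - 4) * (X - 2) *
        (X ^ 3 - ((n : ℝ[X]) + 4) * X ^ 2 + 4 * (n : ℝ[X]) * X - 8) := by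
  obtain ⟨m, rfl⟩ := Nat.exists_eq_add_of_le' hn
  rw [Nat.add_sub_cancel]
  refine eq_of_infinite_eval_eq _ _ ((Set.finite_singleton 1).infinite_compl.mono fun x hx => ?_)
  rw [Set.mem_ofPred_eq, eval_Qpoly_B3 m hx]
  simp only [eval_mul, eval_pow, eval_sub, eval_add, eval_X, eval_one, eval_natCast, eval_ofNat]
  push_cast
  ring
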